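/- For the one-layer nonlinear regression model, the gradient H(θ, y) = ∇_θ U(θ, y) of the regularized quadratic loss U(θ, y) = |h(z,θ) − l|² + κ|θ|² satisfies Assumptions 1 and 2 with β = 2: there exist constants K₁, K₂, K₃ > 0 with |H(θ,y)| ≤ K₁|θ| + K₂|y|² + K₃ for all θ, y, and there exist constants c > 0 and C > 0 with ⟨H(θ,y), θ⟩ ≥ c|θ|² − C(|y|⁴ + 1) for all θ, y. -/

import Mathlib

/-!
The loss gradient is `∑ⱼ 2 (sⱼ(aⱼ) − lⱼ) sⱼ'(aⱼ) uⱼ`, where `aⱼ = ⟪uⱼ, θ⟫` is the `j`-th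
pre-activation and `uⱼ` is the vector carrying `z` in the `j`-th row of `W` and `1` in the
`j`-th entry of `g`. Since `s` and `s'` are bounded, `|lⱼ| ≤ |y|` and `|uⱼ| ≤ |y| + 1`, this
gradient has norm at most `B (|y|² + 1)` for a constant `B`, uniformly in `θ`. Hence
`H = ∇ loss + 2κθ` grows linearly in `θ`, and completing the square in
`⟪H, θ⟫ ≥ 2κ|θ|² − B (|y|² + 1) |θ|` gives the dissipativity bound with `c = κ`.
-/

open scoped RealInnerProductSpace

/-- The feature part z of a data point y = (z, l). -/
noncomputable def featurePart (d₀ d₁ : ℕ) (y : EuclideanSpace ℝ (Fin d₀ ⊕ Fin d₁)) :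
    EuclideanSpace ℝ (Fin d₀) :=
  WithLp.toLp 2 (fun i => y (Sum.inl i))

/-- The label part l of a data point y = (z, l). -/
noncomputable def labelPart (d₀ d₁ : ℕ) (y : EuclideanSpace ℝ (Fin d₀ ⊕ Fin d₁)) :
    EuclideanSpace ℝ (Fin d₁) :=
  WithLp.toLp 2 (fun j => y (Sum.inr j))

/-- One-layer network h(z, θ) = s(Wz + g), with θ = (W, g) flattened into
EuclideanSpace ℝ ((Fin d₁ × Fin d₀) ⊕ Fin d₁). -/
noncomputable def oneLayerNet (d₀ d₁ : ℕ) (s : Fin d₁ → ℝ → ℝ)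
    (z : EuclideanSpace ℝ (Fin d₀))
    (θ : EuclideanSpace ℝ ((Fin d₁ × Fin d₀) ⊕ Fin d₁)) :
    EuclideanSpace ℝ (Fin d₁) :=
  WithLp.toLp 2 (fun j => s j ((∑ i : Fin d₀, θ (Sum.inl (j, i)) * z i) + θ (Sum.inr j)))

noncomputable def oneLayerLoss (d₀ d₁ : ℕ) (s : Fin d₁ → ℝ → ℝ)
    (y : EuclideanSpace ℝ (Fin d₀ ⊕ Fin d₁))
    (θ : EuclideanSpace ℝ ((Fin d₁ × Fin d₀) ⊕ Fin d₁)) : ℝ :=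
  ‖oneLayerNet d₀ d₁ s (featurePart d₀ d₁ y) θ - labelPart d₀ d₁ y‖ ^ 2

noncomputable def testGrad (d₀ d₁ : ℕ) (s : Fin d₁ → ℝ → ℝ)
    (y : EuclideanSpace ℝ (Fin d₀ ⊕ Fin d₁))
    (θ : EuclideanSpace ℝ ((Fin d₁ × Fin d₀) ⊕ Fin d₁)) :=
  gradient (oneLayerLoss d₀ d₁ s y) θ

/-- The gradient H(θ, y) = ∇_θ [ |h(z,θ) − l|² + κ|θ|² ] of the regularized loss. -/
noncomputable def oneLayerH (d₀ d₁ : ℕ) (s : Fin d₁ → ℝ → ℝ) (κ : ℝ)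
    (θ : EuclideanSpace ℝ ((Fin d₁ × Fin d₀) ⊕ Fin d₁))
    (y : EuclideanSpace ℝ (Fin d₀ ⊕ Fin d₁)) :
    EuclideanSpace ℝ ((Fin d₁ × Fin d₀) ⊕ Fin d₁) :=
  gradient (fun θ' => oneLayerLoss d₀ d₁ s y θ' + κ * ‖θ'‖ ^ 2) θ

section Gradient

variable {E : Type*} [NormedAddCommGroup E] [InnerProductSpace ℝ E] [CompleteSpace E]
  {f g : E → ℝ} {f' g' x : E}

theorem HasGradientAt.add (hf : HasGradientAt f f' x) (hg : HasGradientAt g g' x) :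
    HasGradientAt (fun y => f y + g y) (f' + g') x := by
  rw [hasGradientAt_iff_hasFDerivAt, map_add]
  exact hf.hasFDerivAt.add hg.hasFDerivAt

theorem HasGradientAt.sum {ι : Type*} (t : Finset ι) {F : ι → E → ℝ} {F' : ι → E}
    (h : ∀ i ∈ t, HasGradientAt (F i) (F' i) x) :
    HasGradientAt (fun y => ∑ i ∈ t, F i y) (∑ i ∈ t, F' i) x := by
  rw [hasGradientAt_iff_hasFDerivAt, map_sum]
  exact HasFDerivAt.fun_sum fun i hi => (h i hi).hasFDerivAt

theorem HasDerivAt.comp_hasGradientAt {φ : ℝ → ℝ} {φ' : ℝ} (hφ : HasDerivAt φ φ' (f x))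
    (hf : HasGradientAt f f' x) : HasGradientAt (fun y => φ (f y)) (φ' • f') x := by
  rw [hasGradientAt_iff_hasFDerivAt, map_smul]
  exact hφ.comp_hasFDerivAt x hf.hasFDerivAt

theorem hasGradientAt_inner (u x : E) : HasGradientAt (fun y => ⟪u, y⟫) u x :=
  (innerSL ℝ u).hasFDerivAt

theorem hasGradientAt_norm_sq (x : E) : HasGradientAt (fun y => ‖y‖ ^ 2) ((2 : ℝ) • x) x := by
  rw [hasGradientAt_iff_hasFDerivAt, map_smul]
  refine (hasStrictFDerivAt_norm_sq x).hasFDerivAt.congr_fderiv ?_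
  ext y
  simp

end Gradient

theorem inner_add_two_mul_smul_self_ge {E : Type*} [NormedAddCommGroup E] [InnerProductSpace ℝ E]
    (S θ : E) {c b : ℝ} (hc : 0 < c) (hS : ‖S‖ ≤ b) :
    c * ‖θ‖ ^ 2 - b ^ 2 / (4 * c) ≤ ⟪S + (2 * c) • θ, θ⟫ := by
  rw [inner_add_left, real_inner_smul_left, real_inner_self_eq_norm_sq]
  have hSθ : -(b * ‖θ‖) ≤ ⟪S, θ⟫ :=
    neg_le_of_abs_le ((abs_real_inner_le_norm S θ).trans (by gcongr))
  have hsq : 0 ≤ (2 * c * ‖θ‖ - b) ^ 2 / (4 * c) := by positivity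
  have hexp : (2 * c * ‖θ‖ - b) ^ 2 / (4 * c) = c * ‖θ‖ ^ 2 - b * ‖θ‖ + b ^ 2 / (4 * c) := by
    field_simp
    ring
  linarith

noncomputable def oneLayerFeature (d₀ d₁ : ℕ) (z : EuclideanSpace ℝ (Fin d₀)) (j : Fin d₁) :
    EuclideanSpace ℝ ((Fin d₁ × Fin d₀) ⊕ Fin d₁) :=
  WithLp.toLp 2 (Sum.elim (fun q => if q.1 = j then z q.2 else 0) (Pi.single j 1))

section Feature

variable {d₀ d₁ : ℕ} (z : EuclideanSpace ℝ (Fin d₀)) (j : Fin d₁)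

theorem inner_oneLayerFeature (θ : EuclideanSpace ℝ ((Fin d₁ × Fin d₀) ⊕ Fin d₁)) :
    ⟪oneLayerFeature d₀ d₁ z j, θ⟫ = (∑ i, θ (Sum.inl (j, i)) * z i) + θ (Sum.inr j) := by
  simp [PiLp.inner_apply, oneLayerFeature, Fintype.sum_prod_type, Pi.single_apply, mul_comm]

theorem norm_oneLayerFeature_sq : ‖oneLayerFeature d₀ d₁ z j‖ ^ 2 = ‖z‖ ^ 2 + 1 := by
  simp [EuclideanSpace.real_norm_sq_eq, oneLayerFeature, Fintype.sum_prod_type, Pi.single_apply,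
    ite_pow]

theorem norm_oneLayerFeature_le : ‖oneLayerFeature d₀ d₁ z j‖ ≤ ‖z‖ + 1 := by
  refine le_of_sq_le_sq ?_ (by positivity)
  nlinarith [norm_oneLayerFeature_sq z j, norm_nonneg z]

end Feature

theorem norm_featurePart_le (d₀ d₁ : ℕ) (y : EuclideanSpace ℝ (Fin d₀ ⊕ Fin d₁)) :
    ‖featurePart d₀ d₁ y‖ ≤ ‖y‖ := by
  refine le_of_sq_le_sq ?_ (norm_nonneg y)
  rw [EuclideanSpace.real_norm_sq_eq, EuclideanSpace.real_norm_sq_eq, Fintype.sum_sum_type]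
  exact le_add_of_nonneg_right (Finset.sum_nonneg fun j _ => sq_nonneg _)

theorem abs_labelPart_le (d₀ d₁ : ℕ) (y : EuclideanSpace ℝ (Fin d₀ ⊕ Fin d₁)) (j : Fin d₁) :
    |labelPart d₀ d₁ y j| ≤ ‖y‖ :=
  PiLp.norm_apply_le y (Sum.inr j)

theorem oneLayerLoss_eq_sum (d₀ d₁ : ℕ) (s : Fin d₁ → ℝ → ℝ)
    (y : EuclideanSpace ℝ (Fin d₀ ⊕ Fin d₁)) (θ : EuclideanSpace ℝ ((Fin d₁ × Fin d₀) ⊕ Fin d₁)) :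
    oneLayerLoss d₀ d₁ s y θ =
      ∑ j, (s j ⟪oneLayerFeature d₀ d₁ (featurePart d₀ d₁ y) j, θ⟫ - labelPart d₀ d₁ y j) ^ 2 := by
  simp [oneLayerLoss, EuclideanSpace.real_norm_sq_eq, oneLayerNet, inner_oneLayerFeature]

section Model

variable {d₀ d₁ : ℕ} {s : Fin d₁ → ℝ → ℝ} (y : EuclideanSpace ℝ (Fin d₀ ⊕ Fin d₁))
  (θ : EuclideanSpace ℝ ((Fin d₁ × Fin d₀) ⊕ Fin d₁))

theorem hasGradientAt_oneLayerLoss (hs : ∀ j, Differentiable ℝ (s j)) :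
    HasGradientAt (oneLayerLoss d₀ d₁ s y)
      (∑ j, (2 * (s j ⟪oneLayerFeature d₀ d₁ (featurePart d₀ d₁ y) j, θ⟫ - labelPart d₀ d₁ y j) *
          deriv (s j) ⟪oneLayerFeature d₀ d₁ (featurePart d₀ d₁ y) j, θ⟫) •
        oneLayerFeature d₀ d₁ (featurePart d₀ d₁ y) j) θ := by
  rw [show oneLayerLoss d₀ d₁ s y = _ from funext (oneLayerLoss_eq_sum d₀ d₁ s y)]
  refine HasGradientAt.sum _ fun j _ => ?_
  have hφ := ((hs j ⟪oneLayerFeature d₀ d₁ (featurePart d₀ d₁ y) j, θ⟫).hasDerivAt.sub_const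
    (labelPart d₀ d₁ y j)).fun_pow' 2
  convert hφ.comp_hasGradientAt (hasGradientAt_inner _ θ) using 2
  simp [Finset.sum_range_succ]
  ring

theorem oneLayerH_eq (hs : ∀ j, Differentiable ℝ (s j)) (κ : ℝ) :
    oneLayerH d₀ d₁ s κ θ y = testGrad d₀ d₁ s y θ + (2 * κ) • θ := by
  have hreg : HasGradientAt (fun θ' => κ * ‖θ'‖ ^ 2) ((2 * κ) • θ) θ := by
    simpa [smul_smul, mul_comm] using
      ((hasDerivAt_id _).const_mul κ).comp_hasGradientAt (hasGradientAt_norm_sq θ)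
  rw [testGrad, (hasGradientAt_oneLayerLoss y θ hs).gradient]
  exact ((hasGradientAt_oneLayerLoss y θ hs).add hreg).gradient

theorem norm_smul_oneLayerFeature_le {Ms : ℝ} (hsbd : ∀ j x, |s j x| ≤ Ms)
    (hs'bd : ∀ j x, |deriv (s j) x| ≤ Ms) (j : Fin d₁) (a : ℝ) :
    ‖(2 * (s j a - labelPart d₀ d₁ y j) * deriv (s j) a) •
        oneLayerFeature d₀ d₁ (featurePart d₀ d₁ y) j‖ ≤ 4 * Ms * (Ms + 1) * (‖y‖ ^ 2 + 1) := by
  have hMs : 0 ≤ Ms := (abs_nonneg _).trans (hsbd j 0)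
  have hu : ‖oneLayerFeature d₀ d₁ (featurePart d₀ d₁ y) j‖ ≤ ‖y‖ + 1 :=
    (norm_oneLayerFeature_le _ j).trans (by linarith [norm_featurePart_le d₀ d₁ y])
  have hres : |s j a - labelPart d₀ d₁ y j| ≤ Ms + ‖y‖ :=
    (abs_sub _ _).trans (add_le_add (hsbd j a) (abs_labelPart_le d₀ d₁ y j))
  rw [norm_smul, Real.norm_eq_abs, abs_mul, abs_mul, abs_two]
  calc _ ≤ 2 * (Ms + ‖y‖) * Ms * (‖y‖ + 1) := by gcongr; exact hs'bd j a
    _ ≤ 4 * Ms * (Ms + 1) * (‖y‖ ^ 2 + 1) := by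
      nlinarith [mul_nonneg hMs (sq_nonneg (‖y‖ - 1)), mul_nonneg (mul_nonneg hMs hMs)
        (sq_nonneg (‖y‖ - 1)), norm_nonneg y]

theorem norm_testGrad_le (hs : ∀ j, Differentiable ℝ (s j)) {Ms : ℝ}
    (hsbd : ∀ j x, |s j x| ≤ Ms) (hs'bd : ∀ j x, |deriv (s j) x| ≤ Ms) :
    ‖testGrad d₀ d₁ s y θ‖ ≤ d₁ * (4 * Ms * (Ms + 1)) * (‖y‖ ^ 2 + 1) := by
  rw [testGrad, (hasGradientAt_oneLayerLoss y θ hs).gradient]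
  calc _ ≤ ∑ j : Fin d₁, 4 * Ms * (Ms + 1) * (‖y‖ ^ 2 + 1) :=
        (norm_sum_le _ _).trans (Finset.sum_le_sum fun j _ =>
          norm_smul_oneLayerFeature_le y hsbd hs'bd j _)
    _ = _ := by simp [mul_assoc]

end Model

theorem oneLayer_gradient_satisfies_assumptions
    (d₀ d₁ : ℕ) (hd₁ : 0 < d₁)
    (s : Fin d₁ → ℝ → ℝ) (Ms : ℝ)
    (hsdiff : ∀ j, ContDiff ℝ 1 (s j))
    (hsbd : ∀ j x, |s j x| ≤ Ms)
    (hs'bd : ∀ j x, |deriv (s j) x| ≤ Ms)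
    (κ : ℝ) (hκ : 0 < κ) :
    (∃ K₁ > (0 : ℝ), ∃ K₂ > (0 : ℝ), ∃ K₃ > (0 : ℝ),
        ∀ (θ : EuclideanSpace ℝ ((Fin d₁ × Fin d₀) ⊕ Fin d₁))
          (y : EuclideanSpace ℝ (Fin d₀ ⊕ Fin d₁)),
          ‖oneLayerH d₀ d₁ s κ θ y‖ ≤ K₁ * ‖θ‖ + K₂ * ‖y‖ ^ 2 + K₃)
      ∧ (∃ c > (0 : ℝ), ∃ C > (0 : ℝ),
          ∀ (θ : EuclideanSpace ℝ ((Fin d₁ × Fin d₀) ⊕ Fin d₁))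
            (y : EuclideanSpace ℝ (Fin d₀ ⊕ Fin d₁)),
            ⟪oneLayerH d₀ d₁ s κ θ y, θ⟫ ≥ c * ‖θ‖ ^ 2 - C * (‖y‖ ^ 4 + 1)) := by
  have hs : ∀ j, Differentiable ℝ (s j) := fun j => (hsdiff j).differentiable one_ne_zero
  have hMs : 0 ≤ Ms := (abs_nonneg _).trans (hsbd ⟨0, hd₁⟩ 0)
  set B : ℝ := d₁ * (4 * Ms * (Ms + 1)) + 1
  have hB : 0 < B := by positivity
  have hgrad : ∀ θ y, ‖testGrad d₀ d₁ s y θ‖ ≤ B * (‖y‖ ^ 2 + 1) := fun θ y =>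
    (norm_testGrad_le y θ hs hsbd hs'bd).trans (by gcongr; linarith)
  refine ⟨⟨2 * κ, by positivity, B, hB, B, hB, fun θ y => ?_⟩,
    ⟨κ, hκ, B ^ 2 / (2 * κ), by positivity, fun θ y => ?_⟩⟩
  · rw [oneLayerH_eq y θ hs]
    calc _ ≤ ‖testGrad d₀ d₁ s y θ‖ + ‖(2 * κ) • θ‖ := norm_add_le _ _
      _ ≤ _ := by
        rw [norm_smul_of_nonneg (by positivity)]
        linarith [hgrad θ y]
  · have hquartic : (B * (‖y‖ ^ 2 + 1)) ^ 2 / (4 * κ) ≤ B ^ 2 / (2 * κ) * (‖y‖ ^ 4 + 1) := by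
      calc _ = B ^ 2 / (2 * κ) * ((‖y‖ ^ 2 + 1) ^ 2 / 2) := by ring
        _ ≤ _ := by gcongr; nlinarith [sq_nonneg (‖y‖ ^ 2 - 1)]
    rw [oneLayerH_eq y θ hs]
    linarith [inner_add_two_mul_smul_self_ge (testGrad d₀ d₁ s y θ) θ hκ (hgrad θ y)]
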